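/- arXiv:gr-qc/0001047 — 2 statements merged into one kernel-verified Lean document; each statement's English description precedes it below -/
import Mathlib

section
/- Let A be a continuous k×k matrix-valued function on a compact subset K of ℝⁿ, and let α be a real number such that every eigenvalue λ of A(x), for every x in K, satisfies Re λ > α. Then there exists a constant C > 0 such that ‖t^{A(x)}‖ ≤ C t^α for all x ∈ K and all sufficiently small t > 0. -/
/-!
Put `B x = α - A x`, so that `t ^ A x = t ^ α • exp ((-log t) • B x)`; it suffices to bound
`‖exp (s • B x)‖` uniformly in `x ∈ K` and `s ≥ 0`. Every eigenvalue of `exp (B x)` is the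
exponential of an eigenvalue of `B x` (the commuting matrices `B x` and `exp (B x)` have a common
eigenvector), hence lies in the open unit disc, and Gelfand's formula gives `m > 0` with
`‖exp (m • B x)‖ < 1`. This persists for `y` near `x`, and writing `s = q m + r` with `0 ≤ r ≤ m`
bounds `‖exp (s • B y)‖` by the maximum of `‖exp (r • B y)‖` over `r ∈ [0, m]`; compactness of `K`
patches these local bounds together.
-/

open Set

attribute [local instance]
  Matrix.linftyOpNormedAddCommGroup Matrix.linftyOpNormedRing Matrix.linftyOpNormedAlgebra

open Filter Topology NormedSpace

theorem Module.End.exists_hasEigenvector_of_commute {K V : Type*} [Field K] [IsAlgClosed K]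
    [AddCommGroup V] [Module K V] [FiniteDimensional K V] {f g : End K V} (h : Commute f g)
    {μ : K} (hμ : f.HasEigenvalue μ) : ∃ ν v, f.HasEigenvector μ v ∧ g.HasEigenvector ν v := by
  have hmaps : MapsTo g (f.eigenspace μ) (f.eigenspace μ) := mapsTo_genEigenspace_of_comm h μ 1
  have : Nontrivial (f.eigenspace μ) := Submodule.nontrivial_iff_ne_bot.mpr hμ
  obtain ⟨ν, hν⟩ := exists_eigenvalue (g.restrict hmaps)
  obtain ⟨w, hw⟩ := hν.exists_hasEigenvector
  have hw0 : (w : V) ≠ 0 := fun h0 => hw.2 (Subtype.ext h0)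
  exact ⟨ν, w, ⟨w.2, hw0⟩, mem_eigenspace_iff.mpr (congrArg Subtype.val hw.apply_eq_smul), hw0⟩

theorem spectralRadius_lt_one_of_forall_norm_lt_one {𝕜 A : Type*} [NormedField 𝕜]
    [ProperSpace 𝕜] [NormedRing A] [NormedAlgebra 𝕜 A] [CompleteSpace A] (a : A)
    (h : ∀ z ∈ spectrum 𝕜 a, ‖z‖ < 1) : spectralRadius 𝕜 a < 1 := by
  rcases (spectrum 𝕜 a).eq_empty_or_nonempty with he | hne
  · simp [spectralRadius, he]
  · exact_mod_cast spectrum.spectralRadius_lt_of_forall_lt_of_nonempty hne (r := 1)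
      fun z hz => by exact_mod_cast h z hz

theorem exists_pow_norm_lt_one_of_spectralRadius_lt_one {A : Type*} [NormedRing A]
    [NormedAlgebra ℂ A] [CompleteSpace A] {a : A} (ha : spectralRadius ℂ a < 1) :
    ∃ m : ℕ, 0 < m ∧ ‖a ^ m‖ < 1 := by
  obtain ⟨m, hlt, hm⟩ :=
    ((spectrum.pow_norm_pow_one_div_tendsto_nhds_spectralRadius a).eventually_lt_const ha
      |>.and (eventually_gt_atTop 0)).exists
  refine ⟨m, hm, lt_of_not_ge fun h1 => ?_⟩
  rw [ENNReal.ofReal_lt_one] at hlt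
  exact hlt.not_ge (Real.one_le_rpow h1 (by positivity))

namespace Matrix

variable {ι : Type*} [Fintype ι] [DecidableEq ι]

theorem exp_mulVec_of_mulVec_eq_smul {M : Matrix ι ι ℂ} {v : ι → ℂ} {c : ℂ}
    (h : M *ᵥ v = c • v) : exp M *ᵥ v = Complex.exp c • v := by
  have hpow (m : ℕ) : (M ^ m) *ᵥ v = c ^ m • v := by
    induction m with
    | zero => simp
    | succ m ih => rw [pow_succ', ← mulVec_mulVec, ih, mulVec_smul, h, smul_smul, pow_succ]
  have hsum := (exp_series_hasSum_exp' (𝕂 := ℂ) M).map (mulVec.addMonoidHomLeft v)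
    (continuous_id.matrix_mulVec continuous_const)
  rw [Complex.exp_eq_exp_ℂ]
  refine hsum.unique ?_
  convert (exp_series_hasSum_exp' (𝕂 := ℂ) c).smul_const v using 2 with m
  change ((_ : ℂ) • M ^ m) *ᵥ v = _
  rw [smul_mulVec, hpow, smul_smul, smul_eq_mul]

theorem spectrum_exp_subset (M : Matrix ι ι ℂ) :
    spectrum ℂ (exp M) ⊆ Complex.exp '' spectrum ℂ M := by
  intro μ hμ
  rw [← AlgEquiv.spectrum_eq toLinAlgEquiv'] at hμ ⊢
  have hcomm : Commute (toLinAlgEquiv' (exp M)) (toLinAlgEquiv' M) :=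
    ((Commute.refl M).exp_left).map toLinAlgEquiv'
  obtain ⟨ν, v, hμv, hνv⟩ :=
    Module.End.exists_hasEigenvector_of_commute hcomm (.of_mem_spectrum hμ)
  refine ⟨ν, Module.End.hasEigenvalue_iff_mem_spectrum.mp
    (Module.End.hasEigenvalue_of_hasEigenvector hνv), smul_left_injective ℂ hνv.2 ?_⟩
  change Complex.exp ν • v = μ • v
  rw [← exp_mulVec_of_mulVec_eq_smul hνv.apply_eq_smul]
  exact hμv.apply_eq_smul

theorem linfty_opNorm_map_ofReal (M : Matrix ι ι ℝ) : ‖M.map (algebraMap ℝ ℂ)‖ = ‖M‖ := by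
  simp [linfty_opNorm_def]

theorem exp_map_ofReal (M : Matrix ι ι ℝ) :
    (exp M).map (algebraMap ℝ ℂ) = exp (M.map (algebraMap ℝ ℂ)) :=
  map_exp (algebraMap ℝ ℂ).mapMatrix (continuous_id.matrix_map (continuous_algebraMap ℝ ℂ)) M

theorem exists_norm_exp_smul_lt_one {M : Matrix ι ι ℝ} {α : ℝ}
    (h : ∀ lam ∈ spectrum ℂ (M.map (algebraMap ℝ ℂ)), α < lam.re) :
    ∃ m > (0 : ℝ), ‖exp (m • (algebraMap ℝ _ α - M))‖ < 1 := by
  set N := algebraMap ℝ _ α - M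
  have hN : N.map (algebraMap ℝ ℂ) = algebraMap ℂ _ (α : ℂ) - M.map (algebraMap ℝ ℂ) := by
    ext i j
    by_cases hij : i = j <;> simp [N, algebraMap_matrix_apply, hij]
  have hspec : ∀ μ ∈ spectrum ℂ (exp (N.map (algebraMap ℝ ℂ))), ‖μ‖ < 1 := by
    rintro _ hμ
    obtain ⟨z, hz, rfl⟩ := spectrum_exp_subset _ hμ
    rw [hN, ← spectrum.singleton_sub_eq] at hz
    obtain ⟨_, rfl, lam, hlam, rfl⟩ := hz
    simpa [Complex.norm_exp] using h lam hlam
  obtain ⟨m, hm, hlt⟩ := exists_pow_norm_lt_one_of_spectralRadius_lt_one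
    (spectralRadius_lt_one_of_forall_norm_lt_one _ hspec)
  refine ⟨m, by positivity, ?_⟩
  rwa [Nat.cast_smul_eq_nsmul, exp_nsmul, ← linfty_opNorm_map_ofReal, Matrix.map_pow,
    exp_map_ofReal]

end Matrix

theorem norm_pow_mul_le_of_norm_le_one {𝔸 : Type*} [NormedRing 𝔸] {a : 𝔸} (ha : ‖a‖ ≤ 1)
    (b : 𝔸) (q : ℕ) : ‖a ^ q * b‖ ≤ ‖b‖ := by
  induction q with
  | zero => simp
  | succ q ih =>
    calc ‖a ^ (q + 1) * b‖ = ‖a * (a ^ q * b)‖ := by rw [pow_succ', mul_assoc]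
      _ ≤ ‖a‖ * ‖a ^ q * b‖ := norm_mul_le _ _
      _ ≤ ‖b‖ := by nlinarith [norm_nonneg a, norm_nonneg (a ^ q * b)]

section RealBanachAlgebra

variable {𝔸 : Type*} [NormedRing 𝔸] [NormedAlgebra ℚ 𝔸] [NormedAlgebra ℝ 𝔸] [CompleteSpace 𝔸]

theorem exists_mem_Icc_norm_exp_smul_le {a : 𝔸} {m s : ℝ} (hm : 0 < m)
    (ha : ‖exp (m • a)‖ ≤ 1) (hs : 0 ≤ s) :
    ∃ r ∈ Icc 0 m, ‖exp (s • a)‖ ≤ ‖exp (r • a)‖ := by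
  set q := ⌊s / m⌋₊
  have hq : (q : ℝ) * m ≤ s := (le_div_iff₀ hm).mp (Nat.floor_le (div_nonneg hs hm.le))
  have hq' : s < (q + 1) * m := (div_lt_iff₀ hm).mp (Nat.lt_floor_add_one _)
  refine ⟨s - q * m, ⟨by linarith, by linarith⟩, le_of_eq_of_le ?_
    (norm_pow_mul_le_of_norm_le_one ha _ q)⟩
  have hsplit : s • a = q • (m • a) + (s - q * m) • a := by
    rw [← Nat.cast_smul_eq_nsmul ℝ, smul_smul, ← add_smul, add_sub_cancel]
  rw [hsplit, exp_add_of_commute ((((Commute.refl a).smul_left m).smul_left q).smul_right _),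
    exp_nsmul]

theorem IsCompact.exists_bound_norm_exp_smul {X : Type*} [TopologicalSpace X] {K : Set X}
    (hK : IsCompact K) {B : X → 𝔸} (hB : ContinuousOn B K)
    (h : ∀ x ∈ K, ∃ m > (0 : ℝ), ‖exp (m • B x)‖ < 1) :
    ∃ C, ∀ x ∈ K, ∀ s : ℝ, 0 ≤ s → ‖exp (s • B x)‖ ≤ C := by
  refine hK.induction_on (p := fun L => ∃ C, ∀ x ∈ L, ∀ s : ℝ, 0 ≤ s → ‖exp (s • B x)‖ ≤ C)
    ⟨0, by simp⟩ (fun L L' hL ⟨C, hC⟩ => ⟨C, fun x hx => hC x (hL hx)⟩)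
    (fun L L' ⟨C, hC⟩ ⟨C', hC'⟩ => ⟨max C C', ?_⟩) fun y hy => ?_
  · rintro x (hx | hx) s hs
    · exact (hC x hx s hs).trans (le_max_left _ _)
    · exact (hC' x hx s hs).trans (le_max_right _ _)
  obtain ⟨m, hm, hy1⟩ := h y hy
  have hexp : ContinuousOn (fun p : X × ℝ => exp (p.2 • B p.1)) (K ×ˢ Icc (0 : ℝ) m) :=
    exp_continuous.comp_continuousOn
      (continuousOn_snd.smul (hB.comp continuousOn_fst fun _ hp => hp.1))
  obtain ⟨C, hC⟩ := (hK.prod isCompact_Icc).exists_bound_of_continuousOn hexp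
  have hnear : ∀ᶠ x in 𝓝[K] y, ‖exp (m • B x)‖ < 1 :=
    (exp_continuous.continuousAt.comp_continuousWithinAt ((hB y hy).const_smul m)).norm
      |>.eventually_lt continuousWithinAt_const hy1
  refine ⟨_, hnear.and self_mem_nhdsWithin, C, fun x ⟨hx1, hxK⟩ s hs => ?_⟩
  obtain ⟨r, hr, hle⟩ := exists_mem_Icc_norm_exp_smul_le hm hx1.le hs
  exact hle.trans (hC (x, r) ⟨hxK, hr⟩)

theorem exp_log_smul_eq_rpow_smul_exp (a : 𝔸) (c : ℝ) {t : ℝ} (ht : 0 < t) :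
    exp (Real.log t • a) = t ^ c • exp ((-Real.log t) • (algebraMap ℝ 𝔸 c - a)) := by
  have hsplit : Real.log t • a = algebraMap ℝ 𝔸 (Real.log t * c)
      + (-Real.log t) • (algebraMap ℝ 𝔸 c - a) := by
    rw [map_mul, ← Algebra.smul_def]; module
  rw [hsplit, exp_add_of_commute (Algebra.commute_algebraMap_left _ _), ← algebraMap_exp_comm,
    ← Real.exp_eq_exp_ℝ, ← Real.rpow_def_of_pos ht, ← Algebra.smul_def]

end RealBanachAlgebra

/-- If `A` is a continuous matrix-valued function on a compact set `K ⊆ ℝⁿ` all of whose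
eigenvalues have real part `> α`, then `‖t^{A(x)}‖ ≤ C t^α` uniformly on `K` for small
`t > 0`, where `t^M = exp((log t) M)`. -/
theorem matrix_power_uniform_estimate {n k : ℕ} (K : Set (Fin n → ℝ)) (hK : IsCompact K)
    (A : (Fin n → ℝ) → Matrix (Fin k) (Fin k) ℝ) (hA : ContinuousOn A K) (α : ℝ)
    (hspec : ∀ x ∈ K, ∀ lam ∈ spectrum ℂ ((A x).map (algebraMap ℝ ℂ)), α < lam.re) :
    ∃ C > (0 : ℝ), ∃ t₁ > (0 : ℝ), ∀ x ∈ K, ∀ t : ℝ, 0 < t → t < t₁ →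
      ‖NormedSpace.exp (Real.log t • A x)‖ ≤ C * t ^ α := by
  obtain ⟨C, hC⟩ := hK.exists_bound_norm_exp_smul (continuousOn_const.sub hA)
    fun x hx => Matrix.exists_norm_exp_smul_lt_one (hspec x hx)
  refine ⟨max C 1, by positivity, 1, one_pos, fun x hx t ht ht1 => ?_⟩
  have hlog : 0 ≤ -Real.log t := neg_nonneg.mpr (Real.log_nonpos ht.le ht1.le)
  -- not `rw`: the lemma sees matrices through their normed-algebra structure, which agrees with
  -- the statement's ring and scalar action only after unfolding
  refine (congrArg norm (exp_log_smul_eq_rpow_smul_exp (A x) α ht)).trans_le ?_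
  rw [norm_smul, Real.norm_of_nonneg (Real.rpow_nonneg ht.le α), mul_comm]
  gcongr
  exact (hC x hx _ hlog).trans (le_max_left _ _)
end

section
/- Let α₀ > 0, let q₁, q₂, q₃ ∈ ℝ, and set α^a_b = 2(q_b − q_a)₊ + α₀. Consider the linear operator L on 3×3 real matrices γ given by (Lγ)^a_b = α^a_b γ^a_b + 2[γ, D]^a_b, where D = diag(−p₁, −p₂, −p₃) and p_a are real numbers with |p_a − q_a| < ε/2 for all a and α₀ = 4ε. If the q_a are pairwise distinct with separations compatible with the ordering (case III: q_a ordered as the p_a), then every eigenvalue of L is bounded below by α₀. -/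
/-- Spectral bound for the `γ`-`γ` block of the Fuchsian system matrix in case III:
with `α^a_b = 2(q_b − q_a)₊ + α₀`, `D = diag(−p₁,−p₂,−p₃)`, `|p_a − q_a| < ε/2`,
`α₀ = 4ε`, and (case III) `q = p` pairwise distinct, every eigenvalue of
`γ ↦ (α^a_b γ^a_b + 2[γ,D]^a_b)` is bounded below by `α₀`. -/
theorem gamma_block_spectral_bound (ε α₀ : ℝ) (hε : 0 < ε) (hα₀ : α₀ = 4 * ε)
    (p q : Fin 3 → ℝ) (hpq : ∀ a, |p a - q a| < ε / 2) (hcaseIII : q = p)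
    (hdist : ∀ a b, a ≠ b → q a ≠ q b)
    (α : Fin 3 → Fin 3 → ℝ) (hα : ∀ a b, α a b = 2 * max (q b - q a) 0 + α₀)
    (D : Matrix (Fin 3) (Fin 3) ℝ) (hD : D = Matrix.diagonal (fun a => -(p a)))
    (L : Matrix (Fin 3) (Fin 3) ℝ → Matrix (Fin 3) (Fin 3) ℝ)
    (hL : ∀ γ a b, L γ a b = α a b * γ a b + 2 * (γ * D - D * γ) a b)
    (μ : ℝ) (γ : Matrix (Fin 3) (Fin 3) ℝ) (hγ : γ ≠ 0) (heig : L γ = μ • γ) :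
    α₀ ≤ μ := by
  -- find a nonzero entry
  obtain ⟨a, b, hab⟩ : ∃ a b, γ a b ≠ 0 := by
    by_contra h
    push_neg at h
    exact hγ (by ext a b; simp [h a b])
  have h1 : L γ a b = μ * γ a b := by rw [heig]; simp
  have h2 : L γ a b = (α a b + 2 * (p a - p b)) * γ a b := by
    rw [hL, hD, Matrix.sub_apply, Matrix.mul_apply, Matrix.mul_apply]
    simp [Matrix.diagonal, Finset.sum_ite_eq, Finset.sum_ite_eq']
    ring
  have hμ : μ = α a b + 2 * (p a - p b) := by
    have := h1.symm.trans h2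
    exact mul_right_cancel₀ hab this
  rw [hμ, hα, ← hcaseIII]
  rcases le_or_gt (q b - q a) 0 with h | h
  · rw [max_eq_right h]; nlinarith
  · rw [max_eq_left h.le]; nlinarith
end
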